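/- The zero-extended Altes chirplet U is continuous on ℝ; in particular lim_{ω→0⁺} U(ω) = 0 = U(0), so the continuation U(ω) = 0 for ω ≤ 0 is continuous at the origin. -/

import Mathlib

open Filter Topology

/-- The reparameterized Altes chirplet frequency response. -/
noncomputable def altes (κ ω₀ lam : ℝ) : ℝ → ℂ := fun ω =>
  if 0 < ω then
    Complex.exp (-(↑(κ * (Real.log (ω / ω₀)) ^ 2) : ℂ)) *
      Complex.exp (2 * Real.pi * Complex.I * Real.log ω / Real.log lam)
  else 0

/-! The chirp factor `exp (2πi log ω / log λ)` has modulus one, so `‖U ω‖ = exp (-κ log² (ω / ω₀))`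
for `ω > 0`; as `ω → 0⁺` the logarithm tends to `-∞`, so this Gaussian in `log ω` tends to `0`. -/

open Real

lemma continuous_of_eq_zero_of_nonpos {E : Type*} [TopologicalSpace E] [Zero E] {f : ℝ → E}
    (hneg : ∀ x ≤ 0, f x = 0) (hpos : ∀ x, 0 < x → ContinuousAt f x)
    (hzero : Tendsto f (𝓝[>] 0) (𝓝 0)) : Continuous f := by
  refine continuous_iff_continuousAt.2 fun x => ?_
  rcases lt_trichotomy x 0 with hx | rfl | hx
  · have hf : f =ᶠ[𝓝 x] fun _ => 0 := eventually_lt_nhds hx |>.mono fun y hy => hneg y hy.le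
    exact continuousAt_const.congr hf.symm
  · rw [ContinuousAt, hneg 0 le_rfl, ← nhdsLE_sup_nhdsGT, tendsto_sup]
    refine ⟨tendsto_const_nhds.congr' ?_, hzero⟩
    filter_upwards [self_mem_nhdsWithin] with y hy using (hneg y hy).symm
  · exact hpos x hx

lemma tendsto_log_div_nhdsGT_zero {c : ℝ} (hc : c ≠ 0) :
    Tendsto (fun x => log (x / c)) (𝓝[>] 0) atBot := by
  refine (tendsto_log_nhdsGT_zero.atBot_add (tendsto_const_nhds (x := -log c))).congr' ?_
  filter_upwards [self_mem_nhdsWithin] with x (hx : 0 < x)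
  rw [log_div hx.ne' hc, sub_eq_add_neg]

lemma tendsto_exp_neg_mul_sq_atBot {κ : ℝ} (hκ : 0 < κ) :
    Tendsto (fun t => exp (-(κ * t ^ 2))) atBot (𝓝 0) := by
  have hsq : Tendsto (fun t : ℝ => t ^ 2) atBot atTop := by
    simpa only [Function.comp_def, sq_abs] using
      (tendsto_pow_atTop two_ne_zero).comp (tendsto_abs_atBot_atTop (G := ℝ))
  exact tendsto_exp_atBot.comp (tendsto_neg_atTop_atBot.comp (hsq.const_mul_atTop hκ))

lemma altes_of_nonpos (κ ω₀ lam : ℝ) {ω : ℝ} (hω : ω ≤ 0) : altes κ ω₀ lam ω = 0 :=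
  if_neg hω.not_gt

lemma norm_altes_of_pos (κ ω₀ lam : ℝ) {ω : ℝ} (hω : 0 < ω) :
    ‖altes κ ω₀ lam ω‖ = exp (-(κ * log (ω / ω₀) ^ 2)) := by
  have hphase : (2 * π * Complex.I * log ω / log lam : ℂ) =
      ↑(2 * π * log ω / log lam) * Complex.I := by
    push_cast; ring
  rw [altes, if_pos hω, norm_mul, hphase, Complex.norm_exp_ofReal_mul_I, mul_one,
    ← Complex.ofReal_neg, Complex.norm_exp_ofReal]

lemma tendsto_altes_nhdsGT_zero {κ ω₀ : ℝ} (hκ : 0 < κ) (hω₀ : ω₀ ≠ 0) (lam : ℝ) :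
    Tendsto (altes κ ω₀ lam) (𝓝[>] 0) (𝓝 0) := by
  rw [tendsto_zero_iff_norm_tendsto_zero]
  refine ((tendsto_exp_neg_mul_sq_atBot hκ).comp (tendsto_log_div_nhdsGT_zero hω₀)).congr' ?_
  filter_upwards [self_mem_nhdsWithin] with ω (hω : 0 < ω)
  exact (norm_altes_of_pos κ ω₀ lam hω).symm

lemma continuousAt_altes_of_pos (κ ω₀ lam : ℝ) {ω : ℝ} (hω₀ : ω₀ ≠ 0) (hω : 0 < ω) :
    ContinuousAt (altes κ ω₀ lam) ω := by
  have hformula : altes κ ω₀ lam =ᶠ[𝓝 ω] fun x =>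
      Complex.exp (-(↑(κ * (log (x / ω₀)) ^ 2) : ℂ)) *
        Complex.exp (2 * π * Complex.I * log x / log lam) :=
    eventually_gt_nhds hω |>.mono fun _ h => if_pos h
  refine ContinuousAt.congr ?_ hformula.symm
  have hω_ne : ω ≠ 0 := hω.ne'
  have hratio_ne : ω / ω₀ ≠ 0 := div_ne_zero hω_ne hω₀
  fun_prop (disch := assumption)

theorem altes_continuous_general (κ ω₀ lam : ℝ) (hκ : 0 < κ) (hω₀ : 0 < ω₀) :
    Continuous (altes κ ω₀ lam) ∧
      Tendsto (altes κ ω₀ lam) (𝓝[>] (0 : ℝ)) (𝓝 0) ∧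
      altes κ ω₀ lam 0 = 0 := by
  have hzero := tendsto_altes_nhdsGT_zero hκ hω₀.ne' lam
  have hcont : Continuous (altes κ ω₀ lam) :=
    continuous_of_eq_zero_of_nonpos (fun _ => altes_of_nonpos κ ω₀ lam)
      (fun _ => continuousAt_altes_of_pos κ ω₀ lam hω₀.ne') hzero
  exact ⟨hcont, hzero, altes_of_nonpos κ ω₀ lam le_rfl⟩

/-- The zero-extended Altes chirplet is continuous on ℝ; in
particular lim_{ω→0⁺} U(ω) = 0 = U(0), so the zero continuation is continuous
at the origin. -/
theorem altes_continuous (κ ω₀ lam : ℝ) (hκ : 0 < κ) (hω₀ : 0 < ω₀)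
    (hlam : 0 < lam) (hlam1 : lam ≠ 1) :
    Continuous (altes κ ω₀ lam) ∧
      Tendsto (altes κ ω₀ lam) (𝓝[>] (0 : ℝ)) (𝓝 0) ∧
      altes κ ω₀ lam 0 = 0 :=
  altes_continuous_general κ ω₀ lam hκ hω₀
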